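/- Let 1 ≤ p ≤ n, let σ ∈ J_p(1,…,n+1) satisfy σ(p+1) = 1, let c be the (p+1)-cycle on {1,…,n+1} sending j to j+1 for 1 ≤ j ≤ p and p+1 to 1, and set τ̃ = c^{−1} ∘ σ (so τ̃(p+1) = p+1). Let τ be the permutation of {1,…,n} obtained from τ̃ by deleting the fixed point p+1 and relabeling {1,…,n+1}∖{p+1} order-preservingly to {1,…,n}. Let ε : {1,…,n+1} → ℤ/2 be a parity function with ε(p+1) = 1, let ε' : {1,…,n} → ℤ/2 be the corresponding restriction of ε under the relabeling, and set q = #{ 1 ≤ j ≤ p+1 : ε(j) = 1 }. Then (−1)^{(σ^{−1})ᵒ} computed with respect to ε equals (−1)^{q−1}·(−1)^{(τ^{−1})ᵒ} computed with respect to ε'. -/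

import Mathlib

open Finset

/-- `(-1)^{σᵒ}`: the signature of the induced permutation `σᵒ` of the odd indices
(with respect to the parity function `ε`), computed as `(-1)` to the number of
inversions of `σ` among positions carrying odd values. -/
def oddSign {n : ℕ} (σ : Equiv.Perm (Fin n)) (ε : Fin n → ZMod 2) : ℤ :=
  (-1 : ℤ) ^ (Finset.univ.filter fun q : Fin n × Fin n =>
      q.1 < q.2 ∧ ε (σ q.1) = 1 ∧ ε (σ q.2) = 1 ∧ σ q.2 < σ q.1).card

/-- The set `J_p(1,…,n)` of shuffles: permutations of `{1,…,n}` (here `Fin n`)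
increasing on the first `p` positions and on the remaining `n - p` positions. -/
def shuffles (n p : ℕ) : Finset (Equiv.Perm (Fin n)) :=
  Finset.univ.filter fun σ =>
    (∀ i j : Fin n, i < j → (j : ℕ) < p → σ i < σ j) ∧
    (∀ i j : Fin n, i < j → p ≤ (i : ℕ) → σ i < σ j)

/-!
Write `(-1)^{(σ⁻¹)ᵒ}` as `(-1)` to the number of inversions of `σ` among positions of parity `1`.
Since `σ` takes its minimum at `p+1`, every pair `(i, p+1)` with `i < p+1` and `ε i = 1` is such an
inversion, and there are `q - 1` of them. The remaining inversions avoid `p+1` altogether, and on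
the other positions `σ` agrees with `succ ∘ τ` (as `c` maps the complement of `p+1` onto
`{2,…,n+1}` increasingly), which has the same inversions as `τ`.
-/

def oddInversions {m : ℕ} {α : Type*} [LinearOrder α] (f : Fin m → α) (ε : Fin m → ZMod 2) :
    Finset (Fin m × Fin m) :=
  univ.filter fun q => q.1 < q.2 ∧ ε q.1 = 1 ∧ ε q.2 = 1 ∧ f q.2 < f q.1

section oddInversions

variable {m : ℕ} {α β : Type*} [LinearOrder α] [LinearOrder β]

@[simp]
theorem mem_oddInversions {f : Fin m → α} {ε : Fin m → ZMod 2} {q : Fin m × Fin m} :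
    q ∈ oddInversions f ε ↔ q.1 < q.2 ∧ ε q.1 = 1 ∧ ε q.2 = 1 ∧ f q.2 < f q.1 := by
  simp [oddInversions]

theorem oddSign_inv (π : Equiv.Perm (Fin m)) (ε : Fin m → ZMod 2) :
    oddSign π⁻¹ ε = (-1) ^ #(oddInversions π ε) := by
  unfold oddSign oddInversions
  congr 1
  refine card_nbij' (fun q => (π⁻¹ q.2, π⁻¹ q.1)) (fun q => (π q.2, π q.1)) ?_ ?_ ?_ ?_ <;>
    intro q <;> simp +contextual

theorem oddInversions_comp_of_strictMono {g : α → β} (hg : StrictMono g) (f : Fin m → α)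
    (ε : Fin m → ZMod 2) : oddInversions (g ∘ f) ε = oddInversions f ε := by
  simp only [oddInversions, Function.comp_apply, hg.lt_iff_lt]

theorem card_oddInversions_filter_snd_eq {f : Fin (m + 1) → α} {ε : Fin (m + 1) → ZMod 2}
    {P : Fin (m + 1)} (hmin : ∀ i, i ≠ P → f P < f i) (hε : ε P = 1) :
    #((oddInversions f ε).filter (·.2 = P)) = #{i | i < P ∧ ε i = 1} := by
  symm
  refine card_nbij' (fun i => (i, P)) Prod.fst ?_ ?_ ?_ ?_
  · intro i hi
    simp only [mem_coe, mem_filter, mem_univ, true_and, mem_oddInversions] at hi ⊢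
    exact ⟨⟨hi.1, hi.2, hε, hmin i hi.1.ne⟩, trivial⟩
  · rintro q hq
    simp only [mem_coe, mem_filter, mem_univ, true_and, mem_oddInversions] at hq ⊢
    exact ⟨hq.2 ▸ hq.1.1, hq.1.2.1⟩
  · intro i _
    rfl
  · rintro q hq
    simp only [mem_coe, mem_filter, mem_oddInversions] at hq
    exact Prod.ext rfl hq.2.symm

theorem card_oddInversions_filter_snd_ne {f : Fin (m + 1) → α} {ε : Fin (m + 1) → ZMod 2}
    {P : Fin (m + 1)} (hmin : ∀ i, i ≠ P → f P < f i) :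
    #((oddInversions f ε).filter (·.2 ≠ P))
      = #(oddInversions (f ∘ P.succAbove) (ε ∘ P.succAbove)) := by
  symm
  refine card_nbij (fun q => (P.succAbove q.1, P.succAbove q.2)) ?_ ?_ ?_
  · intro q hq
    simp only [mem_coe, mem_filter, mem_oddInversions] at hq ⊢
    exact ⟨⟨Fin.succAbove_lt_succAbove_iff.2 hq.1, hq.2⟩, Fin.succAbove_ne P _⟩
  · intro q _ q' _ h
    simp only [Prod.mk.injEq, Fin.succAbove_right_inj] at h
    exact Prod.ext h.1 h.2
  · rintro ⟨i, j⟩ hq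
    simp only [mem_coe, mem_filter, mem_oddInversions] at hq
    obtain ⟨⟨hij, hi, hj, hfji⟩, hjP : j ≠ P⟩ := hq
    have hiP : i ≠ P := by
      rintro rfl
      exact (hmin j hjP).not_gt hfji
    obtain ⟨a, rfl⟩ := Fin.exists_succAbove_eq hiP
    obtain ⟨b, rfl⟩ := Fin.exists_succAbove_eq hjP
    exact ⟨(a, b), mem_oddInversions.2 ⟨Fin.succAbove_lt_succAbove_iff.1 hij, hi, hj, hfji⟩, rfl⟩

theorem card_oddInversions_of_min {f : Fin (m + 1) → α} {ε : Fin (m + 1) → ZMod 2}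
    {P : Fin (m + 1)} (hmin : ∀ i, i ≠ P → f P < f i) (hε : ε P = 1) :
    #(oddInversions f ε)
      = #{i | i < P ∧ ε i = 1} + #(oddInversions (f ∘ P.succAbove) (ε ∘ P.succAbove)) := by
  rw [← card_oddInversions_filter_snd_eq hmin hε, ← card_oddInversions_filter_snd_ne hmin,
    card_filter_add_card_filter_not]

end oddInversions

theorem card_filter_le_eq_card_filter_lt_add_one {m : ℕ} {ε : Fin m → ZMod 2} {P : Fin m}
    (hε : ε P = 1) :
    #{i | i ≤ P ∧ ε i = 1} = #{i | i < P ∧ ε i = 1} + 1 := by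
  rw [← card_insert_of_notMem (s := {i | i < P ∧ ε i = 1}) (a := P) (by simp)]
  congr 1
  ext i
  simp only [mem_filter, mem_univ, true_and, mem_insert, le_iff_lt_or_eq]
  constructor
  · rintro ⟨hi | rfl, h⟩
    exacts [Or.inr ⟨hi, h⟩, Or.inl rfl]
  · rintro (rfl | ⟨hi, h⟩)
    exacts [⟨Or.inr rfl, hε⟩, ⟨Or.inl hi, h⟩]

theorem cycle_apply_succAbove {m : ℕ} {P : Fin (m + 1)} {c : Fin (m + 1) → Fin (m + 1)}
    (hc : ∀ k : Fin (m + 1), (c k : ℕ) =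
      if (k : ℕ) < P then (k : ℕ) + 1 else if (k : ℕ) = P then 0 else (k : ℕ))
    (j : Fin m) : c (P.succAbove j) = j.succ := by
  ext
  rw [hc]
  rcases Fin.castSucc_lt_or_lt_succ P j with h | h
  · rw [Fin.succAbove_of_castSucc_lt _ _ h]
    rw [Fin.lt_def, Fin.val_castSucc] at h
    simp [h]
  · rw [Fin.succAbove_of_lt_succ _ _ h]
    rw [Fin.lt_def, Fin.val_succ] at h
    simp only [Fin.val_succ]
    split_ifs <;> omega

/-- Same setting as the previous statement, but now the deleted index is odd:
`1 ≤ p ≤ n`, `σ ∈ J_p(1,…,n+1)` with `σ(p+1) = 1`, `τ̃ = c⁻¹ ∘ σ` fixes `p+1`,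
and `τ` is obtained by deleting the fixed point and relabelling.  Let `ε` be a
parity function with `ε(p+1) = 1`, `ε'` its restriction under the relabelling, and
`q = #{1 ≤ j ≤ p+1 : ε(j) = 1}`.  Then `(−1)^{(σ⁻¹)ᵒ}` computed w.r.t. `ε` equals
`(−1)^{q−1}·(−1)^{(τ⁻¹)ᵒ}` computed w.r.t. `ε'`. -/
theorem oddSign_delete_fixed_point_odd (n p : ℕ) (hpn : p ≤ n)
    (σ : Equiv.Perm (Fin (n + 1)))
    (h1 : σ ⟨p, by omega⟩ = ⟨0, by omega⟩)
    (c : Equiv.Perm (Fin (n + 1)))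
    (hc : ∀ k : Fin (n + 1), (c k : ℕ) =
      if (k : ℕ) < p then (k : ℕ) + 1 else if (k : ℕ) = p then 0 else (k : ℕ))
    (τ : Equiv.Perm (Fin n))
    (hτ : ∀ j : Fin n,
      (c⁻¹ * σ) ((⟨p, by omega⟩ : Fin (n + 1)).succAbove j)
        = (⟨p, by omega⟩ : Fin (n + 1)).succAbove (τ j))
    (ε : Fin (n + 1) → ZMod 2) (hε : ε ⟨p, by omega⟩ = 1) :
    oddSign σ⁻¹ ε
      = (-1 : ℤ) ^
          ((Finset.univ.filter fun j : Fin (n + 1) => (j : ℕ) ≤ p ∧ ε j = 1).card - 1) *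
        oddSign τ⁻¹ (fun j => ε ((⟨p, by omega⟩ : Fin (n + 1)).succAbove j)) := by
  set P : Fin (n + 1) := ⟨p, by omega⟩
  have hmin : ∀ i, i ≠ P → σ P < σ i := fun i hi =>
    h1 ▸ Fin.pos_of_ne_zero fun h => hi (σ.injective (h.trans h1.symm))
  have hστ : σ ∘ P.succAbove = Fin.succ ∘ τ := by
    funext j
    rw [Function.comp_apply, Function.comp_apply, ← cycle_apply_succAbove (P := P) hc, ← hτ j,
      Equiv.Perm.mul_apply, Equiv.Perm.inv_def, Equiv.apply_symm_apply]
  have hcount : #{j : Fin (n + 1) | (j : ℕ) ≤ p ∧ ε j = 1} - 1 = #{j | j < P ∧ ε j = 1} :=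
    Nat.sub_eq_of_eq_add (card_filter_le_eq_card_filter_lt_add_one hε)
  rw [oddSign_inv, oddSign_inv, card_oddInversions_of_min hmin hε, hστ,
    oddInversions_comp_of_strictMono Fin.strictMono_succ, hcount, pow_add]
  rfl
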